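/- For every natural number n and integer r \ge 0: B_{n+1}(r) = B_{n+1} + \sum_{k=0}^{n} ((-1)^k (n+1)/(k+1)) * S_r(n+r, k+r) * \langle r \rangle_{k+1}, where S_r denotes r-Stirling numbers of the second kind, B the Bernoulli polynomial/number, and \langle r \rangle_{k+1} the rising factorial. -/
import Mathlib


/-- `rStirling2 r n k` is the `r`-Stirling number of the second kind `S_r(n+r, k+r)`,
counting partitions of an `(n+r)`-set into `k+r` nonempty blocks with the first `r`
elements in distinct blocks; defined via the recurrence
`S_r(n+1+r, k+r) = S_r(n+r, k-1+r) + (k+r) S_r(n+r, k+r)`. -/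
def rStirling2 (r : ℕ) : ℕ → ℕ → ℕ
  | 0, 0 => 1
  | 0, _ + 1 => 0
  | n + 1, 0 => r * rStirling2 r n 0
  | n + 1, k + 1 => rStirling2 r n k + (k + 1 + r) * rStirling2 r n (k + 1)

lemma rStirling2_eq_zero_of_lt (r : ℕ) : ∀ {n k : ℕ}, n < k → rStirling2 r n k = 0 := by
  intro n
  induction n with
  | zero => intro k hk; obtain ⟨k, rfl⟩ := Nat.exists_eq_add_of_lt hk; simp [rStirling2]
  | succ n ih =>
    intro k hk
    match k, hk with
    | k + 1, hk =>
      have h1 : n < k := Nat.lt_of_succ_lt_succ hk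
      rw [rStirling2, ih h1, ih (Nat.lt_succ_of_lt h1)]
      simp

/-- Key identity: `∑ₖ S_r(n,k) (x)ₖ = (x + r)^n` where `(x)ₖ` is the falling factorial. -/
lemma rStirling2_descPochhammer (r n : ℕ) (x : ℚ) :
    ∑ k ∈ Finset.range (n + 1),
      (rStirling2 r n k : ℚ) * (descPochhammer ℚ k).eval x = (x + r) ^ n := by
  induction n with
  | zero => simp [rStirling2]
  | succ n ih =>
    rw [pow_succ, ← ih, Finset.sum_mul]
    rw [Finset.sum_range_succ' _ (n + 1)]
    have hzero : (rStirling2 r n (n + 1) : ℚ) = 0 := by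
      rw [rStirling2_eq_zero_of_lt r (Nat.lt_succ_self n)]; simp
    have key : ∀ k ∈ Finset.range (n + 1),
        (rStirling2 r (n + 1) (k + 1) : ℚ) * (descPochhammer ℚ (k + 1)).eval x =
          (rStirling2 r n k : ℚ) * (descPochhammer ℚ k).eval x * (x - k)
            + ((k : ℚ) + 1 + r) * ((rStirling2 r n (k + 1) : ℚ)
              * (descPochhammer ℚ (k + 1)).eval x) := by
      intro k _
      rw [show rStirling2 r (n + 1) (k + 1)
            = rStirling2 r n k + (k + 1 + r) * rStirling2 r n (k + 1) from rfl]
      rw [descPochhammer_succ_eval]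
      push_cast
      ring
    rw [Finset.sum_congr rfl key, Finset.sum_add_distrib]
    have key2 : ∀ k ∈ Finset.range (n + 1),
        (rStirling2 r n k : ℚ) * (descPochhammer ℚ k).eval x * (x + r) =
          (rStirling2 r n k : ℚ) * (descPochhammer ℚ k).eval x * (x - k)
            + ((k : ℚ) + r) * ((rStirling2 r n k : ℚ) * (descPochhammer ℚ k).eval x) := by
      intro k _; ring
    rw [Finset.sum_congr rfl key2, Finset.sum_add_distrib]
    have h0 : (rStirling2 r (n + 1) 0 : ℚ) * (descPochhammer ℚ 0).eval x
        = (r : ℚ) * ((rStirling2 r n 0 : ℚ) * (descPochhammer ℚ 0).eval x) := by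
      rw [show rStirling2 r (n + 1) 0 = r * rStirling2 r n 0 from rfl]
      push_cast; ring
    rw [h0]
    have : ∑ k ∈ Finset.range (n + 1),
        ((k : ℚ) + r) * ((rStirling2 r n k : ℚ) * (descPochhammer ℚ k).eval x)
        = (r : ℚ) * ((rStirling2 r n 0 : ℚ) * (descPochhammer ℚ 0).eval x)
          + ∑ k ∈ Finset.range n,
            ((k : ℚ) + 1 + r) * ((rStirling2 r n (k + 1) : ℚ)
              * (descPochhammer ℚ (k + 1)).eval x) := by
      rw [Finset.sum_range_succ' _ n]
      push_cast
      rw [zero_add, add_comm]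
    rw [this]
    have hlast : ((n : ℚ) + 1 + r) * ((rStirling2 r n (n + 1) : ℚ)
        * (descPochhammer ℚ (n + 1)).eval x) = 0 := by rw [hzero]; ring
    rw [Finset.sum_range_succ
      (fun k => ((k : ℚ) + 1 + r) * ((rStirling2 r n (k + 1) : ℚ)
        * (descPochhammer ℚ (k + 1)).eval x)) n]
    rw [hzero]
    ring

lemma descPochhammer_eval_neg (m : ℕ) (x : ℚ) :
    (descPochhammer ℚ m).eval (-x) = (-1) ^ m * (ascPochhammer ℚ m).eval x := by
  induction m with
  | zero => simp
  | succ m ih =>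
    rw [descPochhammer_succ_eval, ascPochhammer_succ_eval, ih]
    ring

lemma telescope_descPochhammer (r k : ℕ) :
    ((k : ℚ) + 1) * ∑ j ∈ Finset.range r, (descPochhammer ℚ k).eval ((j : ℚ) - r)
      = (-1) ^ k * (ascPochhammer ℚ (k + 1)).eval (r : ℚ) := by
  have step : ∀ j : ℕ,
      (descPochhammer ℚ (k + 1)).eval (((j + 1 : ℕ) : ℚ) - r)
        - (descPochhammer ℚ (k + 1)).eval ((j : ℚ) - r)
      = ((k : ℚ) + 1) * (descPochhammer ℚ k).eval ((j : ℚ) - r) := by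
    intro j
    have h1 : (descPochhammer ℚ (k + 1)).eval (((j + 1 : ℕ) : ℚ) - r)
        = (((j : ℚ) - r) + 1) * (descPochhammer ℚ k).eval ((j : ℚ) - r) := by
      rw [descPochhammer_succ_left]
      push_cast
      simp [Polynomial.eval_comp]
      ring_nf
    rw [h1, descPochhammer_succ_eval]
    ring
  rw [Finset.mul_sum, ← Finset.sum_congr rfl (fun j _ => step j),
    Finset.sum_range_sub (fun j => (descPochhammer ℚ (k + 1)).eval ((j : ℚ) - r))]
  rw [sub_self, Nat.cast_zero, zero_sub, descPochhammer_eval_neg]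
  cases k with
  | zero => simp [descPochhammer_eval_zero]
  | succ k =>
    rw [show (descPochhammer ℚ (k + 1 + 1)).eval 0 = 0 from by
      simp [descPochhammer_eval_zero]]
    ring

theorem bernoulliPoly_eq_sum_rStirling (n r : ℕ) :
    (Polynomial.bernoulli (n + 1)).eval (r : ℚ) =
      bernoulli (n + 1) +
        ∑ k ∈ Finset.range (n + 1),
          ((-1 : ℚ) ^ k * ((n : ℚ) + 1) / ((k : ℚ) + 1)) * (rStirling2 r n k : ℚ) *
            (ascPochhammer ℚ (k + 1)).eval (r : ℚ) := by
  have hfaul := Polynomial.bernoulli_succ_eval r n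
  rw [Nat.succ_eq_add_one] at hfaul
  rw [hfaul]
  congr 1
  have hpow : ∀ j ∈ Finset.range r, (j : ℚ) ^ n
      = ∑ k ∈ Finset.range (n + 1),
          (rStirling2 r n k : ℚ) * (descPochhammer ℚ k).eval ((j : ℚ) - r) := by
    intro j hj
    rw [rStirling2_descPochhammer r n ((j : ℚ) - r), sub_add_cancel]
  rw [Finset.sum_congr rfl hpow, Finset.sum_comm]
  rw [Finset.mul_sum]
  refine Finset.sum_congr rfl fun k _ => ?_
  rw [← Finset.mul_sum]
  have hk1 : ((k : ℚ) + 1) ≠ 0 := by positivity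
  have htel := telescope_descPochhammer r k
  have : ∑ j ∈ Finset.range r, (descPochhammer ℚ k).eval ((j : ℚ) - r)
      = (-1) ^ k * (ascPochhammer ℚ (k + 1)).eval (r : ℚ) / ((k : ℚ) + 1) := by
    field_simp
    linarith [htel]
  rw [this]
  field_simp
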